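/- arXiv:2411.09817 — 9 statements merged into one kernel-verified Lean document; each statement's English description precedes it below -/
import Mathlib

section
/- There does not exist a dynamic matching mechanism that is both strictly non-wasteful and dynamic envy-free. Concretely, in the two-period market with one home h1 and one child c1 arriving at t=1, and one home h2 and one child c2 arriving at t=2, with utilities V_{h1}(c2)=2 > V_{h1}(c1)=1, V_{h2}(c1)=2 > V_{h2}(c2)=1, U_{c1}(h2)=3/2 > U_{c1}(h1)=1, U_{c2}(h1)=3/2 > U_{c2}(h2)=1, and waiting costs w_c=2 for children and w_h=1/2 for homes, any strictly non-wasteful mechanism violates patience-freeness. -/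
/-- A one-to-one (partial) matching between children and homes. -/
structure Matching (C H : Type) where
  toHome : C → Option H
  toChild : H → Option C
  consistent : ∀ c h, toHome c = some h ↔ toChild h = some c

/-- A dynamic matching market: cardinal utilities, arrival times, waiting costs. -/
structure Market (C H : Type) where
  U : C → H → ℝ
  V : H → C → ℝ
  arrC : C → ℕ
  arrH : H → ℕ
  wC : ℝ
  wH : ℝ

/-- Accept/reject action profiles of homes over time. -/
abbrev Actions (H : Type) := H → ℕ → Bool

/-- A dynamic mechanism: given the homes' action profile, a matching in each period. -/
abbrev Mechanism (C H : Type) := Actions H → ℕ → Matching C H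

open scoped Classical in
/-- The counterfactual profile in which home `h` rejects every placement before `t'`,
accepts at `t'`, and otherwise plays as in `a`; all other homes play as in `a`. -/
noncomputable def cfProfile {H : Type} (a : Actions H) (h : H) (t' : ℕ) : Actions H :=
  fun h' k =>
    if h' = h then (if k < t' then false else if k = t' then true else a h' k)
    else a h' k

namespace Market

variable {C H : Type}

/-- Time-discounted utility of home `h` for child `c` at time `t`:
`V_h^t(c) = V_h(c) - (t - arrival(h)) * w_H`. -/
noncomputable def Vt (M : Market C H) (h : H) (c : C) (t : ℕ) : ℝ :=
  M.V h c - ((t : ℝ) - (M.arrH h : ℝ)) * M.wH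

/-- Child `c` is active (present in the market) at time `t`:
she has arrived and no home has yet accepted a placement with her. -/
def activeC (M : Market C H) (Q : Mechanism C H) (a : Actions H) (c : C) (t : ℕ) : Prop :=
  M.arrC c ≤ t ∧ ¬ ∃ k < t, ∃ h, (Q a k).toHome c = some h ∧ a h k = true

/-- Home `h` is active (present in the market) at time `t`:
it has arrived and has not yet accepted a placement. -/
def activeH (M : Market C H) (Q : Mechanism C H) (a : Actions H) (h : H) (t : ℕ) : Prop :=
  M.arrH h ≤ t ∧ ¬ ∃ k < t, (Q a k).toChild h ≠ none ∧ a h k = true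

/-- Admissibility: the mechanism only matches agents active in the current market. -/
def feasible (M : Market C H) (Q : Mechanism C H) : Prop :=
  ∀ a t c h, (Q a t).toHome c = some h → M.activeC Q a c t ∧ M.activeH Q a h t

/-- Child `c` has been adopted (placement accepted) by time `t`. -/
def childAdopted (M : Market C H) (Q : Mechanism C H) (a : Actions H) (c : C) (t : ℕ) : Prop :=
  ∃ k ≤ t, ∃ h, (Q a k).toHome c = some h ∧ a h k = true

/-- Home `h` has accepted a placement by time `t`. -/
def homeAccepted (M : Market C H) (Q : Mechanism C H) (a : Actions H) (h : H) (t : ℕ) : Prop :=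
  ∃ k ≤ t, (Q a k).toChild h ≠ none ∧ a h k = true

/-- Justified envy-freeness at every period and action profile: no mutually matched
child and home both strictly prefer each other to their assigned partners. -/
def justifiedEnvyFree (M : Market C H) (Q : Mechanism C H) : Prop :=
  ∀ a t c h h' c', (Q a t).toHome c = some h' → (Q a t).toChild h = some c' →
    ¬ (M.U c h' < M.U c h ∧ M.V h c' < M.V h c)

/-- Individual rationality at every period and action profile. -/
def individuallyRational (M : Market C H) (Q : Mechanism C H) : Prop :=
  ∀ a t c h, (Q a t).toHome c = some h → 0 ≤ M.U c h ∧ 0 ≤ M.V h c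

/-- Patience-freeness: any placement offered at `t` is weakly better (time-discounted)
than the placement the home would receive at any later `t'` in the counterfactual in
which it rejects all placements before `t'` and accepts at `t'`. -/
noncomputable def patienceFree (M : Market C H) (Q : Mechanism C H) : Prop :=
  ∀ (a : Actions H) (t : ℕ) (h : H) (c : C), (Q a t).toChild h = some c →
    ∀ t' > t, ∀ c', (Q (cfProfile a h t') t').toChild h = some c' →
      M.Vt h c' t' ≤ M.Vt h c t

/-- Dynamic envy-freeness: justified envy-free, patience-free, individually rational. -/
noncomputable def dynamicEnvyFree (M : Market C H) (Q : Mechanism C H) : Prop :=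
  M.justifiedEnvyFree Q ∧ M.patienceFree Q ∧ M.individuallyRational Q

/-- Strict non-wastefulness: after every history and action profile there is never an
active unmatched child and an active unmatched home that find each other acceptable. -/
def strictlyNonWasteful (M : Market C H) (Q : Mechanism C H) : Prop :=
  ∀ a t, ¬ ∃ c h, M.activeC Q a c t ∧ M.activeH Q a h t ∧
    0 ≤ M.U c h ∧ 0 ≤ M.V h c ∧ (Q a t).toHome c = none ∧ (Q a t).toChild h = none

/-- Weak non-wastefulness: when every home accepts every offered placement,
no mutually acceptable unmatched pair ever remains. -/
def weaklyNonWasteful (M : Market C H) (Q : Mechanism C H) : Prop :=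
  ∀ t, ¬ ∃ c h, M.activeC Q (fun _ _ => true) c t ∧ M.activeH Q (fun _ _ => true) h t ∧
    0 ≤ M.U c h ∧ 0 ≤ M.V h c ∧
    (Q (fun _ _ => true) t).toHome c = none ∧ (Q (fun _ _ => true) t).toChild h = none

/-- The mechanism is a deterministic function of the history of markets (active sets)
and past matchings. -/
def historyDetermined (M : Market C H) (Q : Mechanism C H) : Prop :=
  ∀ a a' t,
    (∀ k ≤ t, ∀ c, M.activeC Q a c k ↔ M.activeC Q a' c k) →
    (∀ k ≤ t, ∀ h, M.activeH Q a h k ↔ M.activeH Q a' h k) →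
    (∀ k < t, Q a k = Q a' k) →
    Q a t = Q a' t

/-- `x` is the realized (true-utility, time-discounted) payoff of home `h`:
the time-discounted utility of an accepted placement, or `0` if `h` never accepts. -/
noncomputable def payoffIs (M : Market C H) (Q : Mechanism C H) (a : Actions H)
    (h : H) (x : ℝ) : Prop :=
  (∃ t c, (Q a t).toChild h = some c ∧ a h t = true ∧ x = M.Vt h c t) ∨
  ((∀ t c, (Q a t).toChild h = some c → a h t = false) ∧ x = 0)

end Market

/-- The two-period counterexample market: children `0 = c₁`, `1 = c₂` and homes
`0 = h₁`, `1 = h₂`, arriving at `t = 1` and `t = 2` respectively. -/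
noncomputable def exMkt : Market (Fin 2) (Fin 2) where
  U := fun c h => if c = 0 then (if h = 0 then 1 else 3 / 2)
    else (if h = 0 then 3 / 2 else 1)
  V := fun h c => if h = 0 then (if c = 0 then 1 else 2)
    else (if c = 0 then 2 else 1)
  arrC := fun c => if c = 0 then 1 else 2
  arrH := fun h => if h = 0 then 1 else 2
  wC := 2
  wH := 1 / 2

/-! In the two-period market, strict non-wastefulness forces `c₁`–`h₁` at `t = 1`. If `h₁`
rejects that placement, all four agents are present at `t = 2`; strict non-wastefulness makes
the matching perfect and justified envy-freeness (`c₁` and `h₂` prefer each other) rules out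
the identity, so `h₁` receives `c₂`. Waiting is then worth `V_{h₁}(c₂) - w_h = 3/2` to `h₁`,
more than the `1` it got by accepting `c₁` at once, against patience-freeness. -/

namespace Matching

variable {C H : Type} (m : Matching C H)

theorem toChild_ne_none_iff {h : H} : m.toChild h ≠ none ↔ ∃ c, m.toHome c = some h := by
  simp only [ne_eq, ← Option.isSome_iff_ne_none, Option.isSome_iff_exists, m.consistent]

theorem eq_of_toHome_eq_some {c c' : C} {h : H} (hc : m.toHome c = some h)
    (hc' : m.toHome c' = some h) : c = c' :=
  Option.some_injective _ (((m.consistent c h).1 hc).symm.trans ((m.consistent c' h).1 hc'))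

end Matching

theorem Matching.fin_two_id_or_swap (m : Matching (Fin 2) (Fin 2))
    (hfull : ∀ c h, m.toHome c ≠ none ∨ m.toChild h ≠ none) :
    (m.toHome 0 = some 0 ∧ m.toHome 1 = some 1) ∨
      (m.toHome 0 = some 1 ∧ m.toHome 1 = some 0) := by
  have key : ∀ f : Fin 2 → Option (Fin 2),
      (∀ c c' h, f c = some h → f c' = some h → c = c') →
      (∀ c h, f c ≠ none ∨ ∃ c', f c' = some h) →
      (f 0 = some 0 ∧ f 1 = some 1) ∨ (f 0 = some 1 ∧ f 1 = some 0) := by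
    decide
  exact key m.toHome (fun _ _ _ => m.eq_of_toHome_eq_some)
    fun c h => (hfull c h).imp_right m.toChild_ne_none_iff.1

def Mechanism.NoAcceptanceBefore {C H : Type} (Q : Mechanism C H) (a : Actions H) (t : ℕ) :
    Prop :=
  ∀ k < t, ∀ c h, (Q a k).toHome c = some h → a h k = false

namespace Market

variable {C H : Type} {M : Market C H} {Q : Mechanism C H} {a : Actions H} {t : ℕ}

theorem feasible.arrC_le (hQ : M.feasible Q) {c : C} {h : H} (hm : (Q a t).toHome c = some h) :
    M.arrC c ≤ t :=
  (hQ a t c h hm).1.1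

theorem feasible.arrH_le (hQ : M.feasible Q) {c : C} {h : H} (hm : (Q a t).toHome c = some h) :
    M.arrH h ≤ t :=
  (hQ a t c h hm).2.1

theorem activeC_of_noAcceptanceBefore {c : C} (hc : M.arrC c ≤ t)
    (hQ : Q.NoAcceptanceBefore a t) : M.activeC Q a c t := by
  refine ⟨hc, ?_⟩
  rintro ⟨k, hk, h, hm, hacc⟩
  simp [hQ k hk c h hm] at hacc

theorem activeH_of_noAcceptanceBefore {h : H} (hh : M.arrH h ≤ t)
    (hQ : Q.NoAcceptanceBefore a t) : M.activeH Q a h t := by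
  refine ⟨hh, ?_⟩
  rintro ⟨k, hk, hm, hacc⟩
  obtain ⟨c, hc⟩ := (Q a k).toChild_ne_none_iff.1 hm
  simp [hQ k hk c h hc] at hacc

theorem strictlyNonWasteful.matched_of_active (hQ : M.strictlyNonWasteful Q) {c : C} {h : H}
    (hc : M.activeC Q a c t) (hh : M.activeH Q a h t) (hU : 0 ≤ M.U c h) (hV : 0 ≤ M.V h c) :
    (Q a t).toHome c ≠ none ∨ (Q a t).toChild h ≠ none := by
  by_contra! hnone
  exact hQ a t ⟨c, h, hc, hh, hU, hV, hnone⟩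

end Market

namespace exMkt

theorem acceptable (c h : Fin 2) : 0 ≤ exMkt.U c h ∧ 0 ≤ exMkt.V h c := by
  fin_cases c <;> fin_cases h <;> norm_num [exMkt]

theorem eq_zero_of_arrC_le_one {c : Fin 2} (hc : exMkt.arrC c ≤ 1) : c = 0 := by
  fin_cases c <;> simp_all [exMkt]

theorem eq_zero_of_arrH_le_one {h : Fin 2} (hh : exMkt.arrH h ≤ 1) : h = 0 := by
  fin_cases h <;> simp_all [exMkt]

theorem arrC_le_two (c : Fin 2) : exMkt.arrC c ≤ 2 := by
  fin_cases c <;> simp [exMkt]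

theorem arrH_le_two (h : Fin 2) : exMkt.arrH h ≤ 2 := by
  fin_cases h <;> simp [exMkt]

variable {Q : Mechanism (Fin 2) (Fin 2)}

theorem noAcceptanceBefore_one (hfeas : exMkt.feasible Q) (b : Actions (Fin 2)) :
    Q.NoAcceptanceBefore b 1 := by
  intro k hk c h hm
  obtain rfl : k = 0 := by omega
  have := hfeas.arrC_le hm
  fin_cases c <;> simp [exMkt] at this

theorem toHome_one (hfeas : exMkt.feasible Q) (hsnw : exMkt.strictlyNonWasteful Q)
    (b : Actions (Fin 2)) : (Q b 1).toHome 0 = some 0 := by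
  have hc : exMkt.activeC Q b 0 1 :=
    Market.activeC_of_noAcceptanceBefore (by simp [exMkt]) (noAcceptanceBefore_one hfeas b)
  have hh : exMkt.activeH Q b 0 1 :=
    Market.activeH_of_noAcceptanceBefore (by simp [exMkt]) (noAcceptanceBefore_one hfeas b)
  rcases hsnw.matched_of_active hc hh (acceptable 0 0).1 (acceptable 0 0).2 with hm | hm
  · obtain ⟨h, hm⟩ := Option.ne_none_iff_exists'.1 hm
    rwa [eq_zero_of_arrH_le_one (hfeas.arrH_le hm)] at hm
  · obtain ⟨c, hm⟩ := (Q b 1).toChild_ne_none_iff.1 hm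
    rwa [eq_zero_of_arrC_le_one (hfeas.arrC_le hm)] at hm

theorem noAcceptanceBefore_two_of_reject (hfeas : exMkt.feasible Q)
    (hsnw : exMkt.strictlyNonWasteful Q) (a : Actions (Fin 2)) :
    Q.NoAcceptanceBefore (cfProfile a 0 2) 2 := by
  intro k hk c h hm
  interval_cases k
  · exact noAcceptanceBefore_one hfeas _ 0 one_pos c h hm
  · obtain rfl := eq_zero_of_arrC_le_one (hfeas.arrC_le hm)
    obtain rfl : h = 0 := Option.some_injective _ (hm.symm.trans (toHome_one hfeas hsnw _))
    simp [cfProfile]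

theorem toChild_two_of_reject (hfeas : exMkt.feasible Q) (hsnw : exMkt.strictlyNonWasteful Q)
    (hjef : exMkt.justifiedEnvyFree Q) (a : Actions (Fin 2)) :
    (Q (cfProfile a 0 2) 2).toChild 0 = some 1 := by
  have hnone := noAcceptanceBefore_two_of_reject hfeas hsnw a
  have hfull := fun c h => hsnw.matched_of_active
    (Market.activeC_of_noAcceptanceBefore (arrC_le_two c) hnone)
    (Market.activeH_of_noAcceptanceBefore (arrH_le_two h) hnone)
    (acceptable c h).1 (acceptable c h).2
  rcases (Q _ 2).fin_two_id_or_swap hfull with ⟨h00, h11⟩ | ⟨-, h10⟩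
  · exact absurd (by norm_num [exMkt]) (hjef _ 2 0 1 0 1 h00 (((Q _ 2).consistent 1 1).1 h11))
  · exact ((Q _ 2).consistent 1 0).1 h10

end exMkt

theorem no_strictlyNonWasteful_dynamicEnvyFree_general (Q : Mechanism (Fin 2) (Fin 2))
    (hfeas : exMkt.feasible Q) (hsnw : exMkt.strictlyNonWasteful Q)
    (hjef : exMkt.justifiedEnvyFree Q) :
    ¬ exMkt.patienceFree Q := by
  intro hpf
  let accept : Actions (Fin 2) := fun _ _ => true
  have hoffer : (Q accept 1).toChild 0 = some 0 :=
    ((Q accept 1).consistent 0 0).1 (exMkt.toHome_one hfeas hsnw accept)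
  have hwait := hpf accept 1 0 0 hoffer 2 one_lt_two 1
    (exMkt.toChild_two_of_reject hfeas hsnw hjef accept)
  norm_num [Market.Vt, exMkt] at hwait

/-- Theorem 1: no mechanism is strictly non-wasteful and dynamic envy-free.
In the concrete two-period market any strictly non-wasteful mechanism that is
justified envy-free and individually rational must violate patience-freeness. -/
theorem no_strictlyNonWasteful_dynamicEnvyFree (Q : Mechanism (Fin 2) (Fin 2))
    (hfeas : exMkt.feasible Q) (hsnw : exMkt.strictlyNonWasteful Q)
    (hjef : exMkt.justifiedEnvyFree Q) (hir : exMkt.individuallyRational Q) :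
    ¬ exMkt.patienceFree Q :=
  no_strictlyNonWasteful_dynamicEnvyFree_general Q hfeas hsnw hjef
end

section
/- Home Penalized Deferred Acceptance is patience-free: for every time t, home h, and full action profile, if HPDA offers h a placement at t (μ_t(h) ≠ h), then V_h^t(μ_t(h)) ≥ V_h^{t'}(counterfactual-μ_{t'}(h)) for all t' > t, where the counterfactual matching arises from the action profile in which h rejects all placements before t' and accepts at t'. -/
namespace Market

variable {C H : Type}

/-- `k` is the most recent period before `t` at which home `h` received placement `c`. -/
def lastPlacement (M : Market C H) (Q : Mechanism C H) (a : Actions H) (h : H)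
    (t k : ℕ) (c : C) : Prop :=
  k < t ∧ (Q a k).toChild h = some c ∧ ∀ k', k < k' → k' < t → (Q a k').toChild h = none

/-- HPDA's truncation condition at time `t`: home `h` has a most recent previous
placement at `k`, and the best active child acceptable to her would give `h` strictly
larger time-discounted utility than that rejected placement. -/
noncomputable def truncatedHPDA (M : Market C H) (Q : Mechanism C H) (a : Actions H)
    (h : H) (t : ℕ) : Prop :=
  ∃ k c, M.lastPlacement Q a h t k c ∧
    ∃ c', M.activeC Q a c' t ∧ 0 ≤ M.U c' h ∧ M.Vt h c k < M.Vt h c' t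

/-- Characterization of Home Penalized Deferred Acceptance: a deterministic function of
the history that each period truncates the preferences of homes satisfying the
truncation condition (giving them no placement) and otherwise produces a matching that
is stable (individually rational and without blocking pairs) on the active agents with
respect to the truncated preferences. -/
structure IsHPDA (M : Market C H) (Q : Mechanism C H) : Prop where
  feasible : M.feasible Q
  histDet : M.historyDetermined Q
  ir : ∀ a t c h, (Q a t).toHome c = some h → 0 ≤ M.U c h ∧ 0 ≤ M.V h c
  truncate : ∀ a t h, M.truncatedHPDA Q a h t → (Q a t).toChild h = none
  stable : ∀ a t c h, M.activeC Q a c t → M.activeH Q a h t →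
    ¬ M.truncatedHPDA Q a h t → 0 ≤ M.U c h → 0 ≤ M.V h c →
    ¬ ((∀ h', (Q a t).toHome c = some h' → M.U c h' < M.U c h) ∧
       (∀ c', (Q a t).toChild h = some c' → M.V h c' < M.V h c))

end Market

/-!
Under HPDA the discounted value of the placements offered to a home never increases: were a
later offer worth more than the most recent earlier one, the truncation rule would have
withheld it. A home offered a placement at `t` has accepted nothing before `t`, so the
counterfactual profile in which it rejects until `t'` agrees with the actual one on every offered
placement before `t`; by history determinism both profiles produce the same matchings up to `t`,
and the counterfactual offer at `t'` is worth at most the offer at `t`.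
-/

namespace Market

variable {C H : Type} {M : Market C H} {Q : Mechanism C H}

def AgreeOnOffers (Q : Mechanism C H) (a b : Actions H) (t : ℕ) : Prop :=
  ∀ k < t, ∀ h, (Q a k).toChild h ≠ none → a h k = b h k

theorem offer_accepted_iff_of_agree {a b : Actions H} {k : ℕ} (hQk : Q a k = Q b k)
    (hab : ∀ h, (Q a k).toChild h ≠ none → a h k = b h k) (h : H) :
    ((Q a k).toChild h ≠ none ∧ a h k = true) ↔
      ((Q b k).toChild h ≠ none ∧ b h k = true) := by
  rw [← hQk]
  exact and_congr_right fun hne => by rw [hab h hne]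

theorem placement_accepted_iff_of_agree {a b : Actions H} {k : ℕ} (hQk : Q a k = Q b k)
    (hab : ∀ h, (Q a k).toChild h ≠ none → a h k = b h k) (c : C) (h : H) :
    ((Q a k).toHome c = some h ∧ a h k = true) ↔
      ((Q b k).toHome c = some h ∧ b h k = true) := by
  rw [(Q a k).consistent, (Q b k).consistent, ← hQk]
  exact and_congr_right fun hc => by rw [hab h (by simp [hc])]

theorem activeH_iff_of_agree {a b : Actions H} {j : ℕ} (hQ : ∀ k < j, Q a k = Q b k)
    (hab : AgreeOnOffers Q a b j) (h : H) : M.activeH Q a h j ↔ M.activeH Q b h j := by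
  unfold activeH
  exact and_congr_right fun _ => not_congr <| exists_congr fun k =>
    and_congr_right fun hk => offer_accepted_iff_of_agree (hQ k hk) (hab k hk) h

theorem activeC_iff_of_agree {a b : Actions H} {j : ℕ} (hQ : ∀ k < j, Q a k = Q b k)
    (hab : AgreeOnOffers Q a b j) (c : C) : M.activeC Q a c j ↔ M.activeC Q b c j := by
  unfold activeC
  exact and_congr_right fun _ => not_congr <| exists_congr fun k =>
    and_congr_right fun hk => exists_congr fun h =>
      placement_accepted_iff_of_agree (hQ k hk) (hab k hk) c h

theorem AgreeOnOffers.mono {a b : Actions H} {j t : ℕ} (hab : AgreeOnOffers Q a b t)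
    (hj : j ≤ t) : AgreeOnOffers Q a b j :=
  fun k hk => hab k (hk.trans_le hj)

theorem historyDetermined.eq_of_agreeOnOffers (hQ : M.historyDetermined Q) {a b : Actions H}
    {t : ℕ} (hab : AgreeOnOffers Q a b t) : ∀ k ≤ t, Q a k = Q b k := by
  intro k
  induction k using Nat.strong_induction_on with
  | _ k ih =>
    intro hk
    have hbefore : ∀ j ≤ k, ∀ m < j, Q a m = Q b m :=
      fun j hj m hm => ih m (hm.trans_le hj) ((hm.trans_le hj).le.trans hk)
    exact hQ a b k
      (fun j hj => activeC_iff_of_agree (hbefore j hj) (hab.mono (hj.trans hk)))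
      (fun j hj => activeH_iff_of_agree (hbefore j hj) (hab.mono (hj.trans hk)))
      (fun m hm => ih m hm (hm.le.trans hk))

theorem agreeOnOffers_cfProfile {a : Actions H} {h : H} {t t' : ℕ}
    (hact : M.activeH Q a h t) (htt' : t ≤ t') : AgreeOnOffers Q a (cfProfile a h t') t := by
  intro k hk h₀ hoffer
  by_cases hh : h₀ = h
  · subst hh
    have hrej : a h₀ k = false := by
      simpa using fun hacc => hact.2 ⟨k, hk, hoffer, hacc⟩
    simp [cfProfile, hrej, hk.trans_le htt']
  · simp [cfProfile, hh]

theorem exists_lastPlacement {a : Actions H} {h : H} {c : C} {t : ℕ}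
    (hc : (Q a t).toChild h = some c) :
    ∀ s, t < s → ∃ k, t ≤ k ∧ ∃ ck, M.lastPlacement Q a h s k ck := by
  intro s hts
  induction s, hts using Nat.le_induction with
  | base => exact ⟨t, le_rfl, c, Nat.lt_succ_self t, hc, fun k' hk' hk's => by omega⟩
  | succ s hts ih =>
    cases hs : (Q a s).toChild h with
    | some cs => exact ⟨s, by omega, cs, Nat.lt_succ_self s, hs, fun k' hk' hk's => by omega⟩
    | none =>
      obtain ⟨k, htk, ck, hks, hck, hnone⟩ := ih
      refine ⟨k, htk, ck, hks.trans (Nat.lt_succ_self s), hck, fun k' hk' hk's => ?_⟩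
      rcases (Nat.lt_succ_iff.mp hk's).lt_or_eq with hk's | rfl
      · exact hnone k' hk' hk's
      · exact hs

theorem IsHPDA.Vt_le_of_lastPlacement (hQ : M.IsHPDA Q) {a : Actions H} {h : H} {s k : ℕ}
    {ck cs : C} (hlast : M.lastPlacement Q a h s k ck) (hcs : (Q a s).toChild h = some cs) :
    M.Vt h cs s ≤ M.Vt h ck k := by
  by_contra! hlt
  have hpair := ((Q a s).consistent cs h).mpr hcs
  have htrunc : M.truncatedHPDA Q a h s :=
    ⟨k, ck, hlast, cs, (hQ.feasible a s cs h hpair).1, (hQ.ir a s cs h hpair).1, hlt⟩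
  simp [hQ.truncate a s h htrunc] at hcs

theorem IsHPDA.Vt_le_of_offered_later (hQ : M.IsHPDA Q) {a : Actions H} {h : H} {t : ℕ}
    {c : C} (hc : (Q a t).toChild h = some c) :
    ∀ s, t ≤ s → ∀ cs, (Q a s).toChild h = some cs → M.Vt h cs s ≤ M.Vt h c t := by
  intro s
  induction s using Nat.strong_induction_on with
  | _ s ih =>
    intro hts cs hcs
    rcases hts.lt_or_eq with hts | rfl
    · obtain ⟨k, htk, ck, hlast⟩ := exists_lastPlacement hc s hts
      exact (hQ.Vt_le_of_lastPlacement hlast hcs).trans (ih k hlast.1 htk ck hlast.2.1)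
    · obtain rfl := Option.some.inj (hc.symm.trans hcs)
      exact le_rfl

end Market

/-- Theorem 2 (patience-freeness part): HPDA is patience-free. -/
theorem hpda_patienceFree {C H : Type} (M : Market C H) (Q : Mechanism C H)
    (hQ : M.IsHPDA Q) : M.patienceFree Q := by
  intro a t h c hc t' ht' c' hc'
  have hact : M.activeH Q a h t := (hQ.feasible a t c h (((Q a t).consistent c h).mpr hc)).2
  have hsame : Q a t = Q (cfProfile a h t') t :=
    hQ.histDet.eq_of_agreeOnOffers (Market.agreeOnOffers_cfProfile hact ht'.le) t le_rfl
  exact hQ.Vt_le_of_offered_later (hsame ▸ hc) t' ht'.le c' hc'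
end

section
/- Under HPDA, for any action profile and any home h first offered a placement at time t, every subsequent placement offer (actual or counterfactual) has weakly smaller time-discounted utility: for all k ≥ t with μ_k(h) ≠ h, V_h^k(μ_k(h)) ≤ V_h^t(μ_t(h)). -/
/-- Under HPDA, for any action profile, if home `h` is first offered a placement at
time `t`, then every subsequent placement offer has weakly smaller time-discounted
utility. -/
theorem hpda_offers_decrease {C H : Type} (M : Market C H) (Q : Mechanism C H)
    (hQ : M.IsHPDA Q) (a : Actions H) (h : H) (t : ℕ) (c : C)
    (hfirst : (Q a t).toChild h = some c) (hpre : ∀ k < t, (Q a k).toChild h = none)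
    (k : ℕ) (hk : t ≤ k) (c' : C) (hoff : (Q a k).toChild h = some c') :
    M.Vt h c' k ≤ M.Vt h c t := by
  classical
  induction k using Nat.strong_induction_on generalizing c' with
  | _ k ih =>
    rcases eq_or_lt_of_le hk with h1 | h1
    · subst h1; rw [hfirst] at hoff; cases hoff; exact le_refl _
    · set n := Nat.findGreatest (fun m => (Q a m).toChild h ≠ none) (k - 1) with hn
      have hPt : (Q a t).toChild h ≠ none := by simp [hfirst]
      have ht' : t ≤ k - 1 := Nat.le_pred_of_lt h1
      have hn1 : (Q a n).toChild h ≠ none := Nat.findGreatest_spec (P := fun m => (Q a m).toChild h ≠ none) ht' hPt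
      have hnk : n ≤ k - 1 := Nat.findGreatest_le _
      have hnk' : n < k := by omega
      have hgap : ∀ k', n < k' → k' < k → (Q a k').toChild h = none := by
        intro k' h1' h2'
        by_contra hne
        exact absurd (Nat.le_findGreatest (P := fun m => (Q a m).toChild h ≠ none) (show k' ≤ k - 1 by omega) hne) (by omega)
      obtain ⟨c'', hc''⟩ := Option.ne_none_iff_exists'.mp hn1
      have htn : t ≤ n := by
        by_contra hlt
        exact hn1 (hpre n (by omega))
      have hlast : M.lastPlacement Q a h k n c'' := ⟨hnk', hc'', hgap⟩
      have hnt : ¬ M.truncatedHPDA Q a h k := by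
        intro htr
        have := hQ.truncate a k h htr
        rw [hoff] at this; exact Option.some_ne_none _ this
      have hch : (Q a k).toHome c' = some h := ((Q a k).consistent c' h).mpr hoff
      have hact := (hQ.feasible a k c' h hch).1
      have hacc := (hQ.ir a k c' h hch).1
      have hle : M.Vt h c' k ≤ M.Vt h c'' n := by
        by_contra hgt
        exact hnt ⟨n, c'', hlast, c', hact, hacc, lt_of_not_ge hgt⟩
      exact le_trans hle (ih n hnk' htn c'' hc'')
end

section
/- Home Penalized Deferred Acceptance is weakly non-wasteful: if every home accepts every placement it is offered, then at no time t do there exist an active child c and active home h with U_c(h) ≥ 0, V_h(c) ≥ 0, μ_t(c) = c, and μ_t(h) = h. -/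
/-! Truncating a home at `t` requires an earlier placement to it. When every home accepts
every placement, that placement was accepted and the home has left the market, so no active
home is ever truncated; HPDA's stability then rules out an unmatched, mutually acceptable
active pair. -/

namespace Market

variable {C H : Type} (M : Market C H) (Q : Mechanism C H) (a : Actions H)

theorem not_truncatedHPDA_of_activeH {h : H} {t : ℕ} (hacc : ∀ k < t, a h k = true)
    (hh : M.activeH Q a h t) : ¬ M.truncatedHPDA Q a h t := by
  rintro ⟨k, c, ⟨hk, hplaced, -⟩, -⟩
  exact hh.2 ⟨k, hk, by simp [hplaced], hacc k hk⟩

variable {M Q a}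

theorem IsHPDA.toHome_ne_none_or_toChild_ne_none (hQ : M.IsHPDA Q) {t : ℕ} {c : C} {h : H}
    (hc : M.activeC Q a c t) (hh : M.activeH Q a h t) (hnt : ¬ M.truncatedHPDA Q a h t)
    (hU : 0 ≤ M.U c h) (hV : 0 ≤ M.V h c) :
    (Q a t).toHome c ≠ none ∨ (Q a t).toChild h ≠ none := by
  rw [← not_and_or]
  rintro ⟨hcn, hhn⟩
  exact hQ.stable a t c h hc hh hnt hU hV
    ⟨fun _ hh' => by simp [hcn] at hh', fun _ hc' => by simp [hhn] at hc'⟩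

end Market

/-- Theorem 2 (non-wastefulness part): HPDA is weakly non-wasteful. -/
theorem hpda_weaklyNonWasteful {C H : Type} (M : Market C H) (Q : Mechanism C H)
    (hQ : M.IsHPDA Q) : M.weaklyNonWasteful Q := by
  rintro t ⟨c, h, hc, hh, hU, hV, hcn, hhn⟩
  have hnt := M.not_truncatedHPDA_of_activeH Q _ (fun _ _ => rfl) hh
  exact (hQ.toHome_ne_none_or_toChild_ne_none hc hh hnt hU hV).elim (· hcn) (· hhn)
end

section
/- Child Rotating Deferred Acceptance (CRDA) is justified envy-free at every time and action profile, even allowing envy by homes with no placement: there never exist a child c with μ_t(c) ≠ c and a home h such that U_c(h) > U_c(μ_t(c)) and V_h(c) > V_h(μ_t(h)) (where V_h(μ_t(h)) = 0 if h is unmatched). -/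
namespace Market

variable {C H : Type}

/-- Stability (feasibility, individual rationality and no blocking pair) of a matching
on given sets of active children and homes. -/
def IsStableOn (M : Market C H) (aC : Set C) (aH : Set H) (μ : Matching C H) : Prop :=
  (∀ c h, μ.toHome c = some h → c ∈ aC ∧ h ∈ aH ∧ 0 ≤ M.U c h ∧ 0 ≤ M.V h c) ∧
  (∀ c h, c ∈ aC → h ∈ aH → 0 ≤ M.U c h → 0 ≤ M.V h c →
    ¬ ((∀ h', μ.toHome c = some h' → M.U c h' < M.U c h) ∧
       (∀ c', μ.toChild h = some c' → M.V h c' < M.V h c)))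

end Market

namespace Market

variable {C H : Type}

/-- Characterization of the output of child-proposing Deferred Acceptance:
the child-optimal stable matching on the given sets. -/
def IsChildOptimalOn (M : Market C H) (aC : Set C) (aH : Set H) (μ : Matching C H) : Prop :=
  M.IsStableOn aC aH μ ∧
  ∀ μ', M.IsStableOn aC aH μ' → ∀ c h, μ'.toHome c = some h →
    ∃ h', μ.toHome c = some h' ∧ M.U c h ≤ M.U c h'

/-- CRDA's trigger: some home whose most recently rejected placement had
time-discounted value `prev h` gets a strictly better match in the MATCHING phase. -/
noncomputable def crdaTrigger (M : Market C H) (prev : H → Option ℝ) (t : ℕ)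
    (μM : Matching C H) : Prop :=
  ∃ h c b, μM.toChild h = some c ∧ prev h = some b ∧ b < M.Vt h c t

/-- A child is flagged for rotation: some acceptable active home is strictly preferred
to her MATCHING match, or her assigned home improves on its previously rejected placement. -/
noncomputable def crdaFlagged (M : Market C H) (aH : Set H) (prev : H → Option ℝ)
    (t : ℕ) (μM : Matching C H) (c : C) : Prop :=
  (∃ h ∈ aH, 0 ≤ M.V h c ∧ ∀ h', μM.toHome c = some h' → M.U c h' < M.U c h) ∨
  (∃ h b, μM.toHome c = some h ∧ prev h = some b ∧ b < M.Vt h c t)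

/-- The set `\hat R_C^t`: flagged or unmatched active children. -/
noncomputable def crdaHatRC (M : Market C H) (aC : Set C) (aH : Set H)
    (prev : H → Option ℝ) (t : ℕ) (μM : Matching C H) : Set C :=
  {c ∈ aC | M.crdaFlagged aH prev t μM c ∨ μM.toHome c = none}

/-- The set `R_H^t`: active homes matched to flagged children, or unmatched. -/
noncomputable def crdaRH (M : Market C H) (aC : Set C) (aH : Set H)
    (prev : H → Option ℝ) (t : ℕ) (μM : Matching C H) : Set H :=
  {h ∈ aH | (∃ c ∈ M.crdaHatRC aC aH prev t μM, μM.toChild h = some c) ∨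
    μM.toChild h = none}

/-- The set `R_C^t`: children of `\hat R_C^t` weakly below every relevant home's
previously rejected placement value. -/
noncomputable def crdaRC (M : Market C H) (aC : Set C) (aH : Set H)
    (prev : H → Option ℝ) (t : ℕ) (μM : Matching C H) : Set C :=
  {c ∈ M.crdaHatRC aC aH prev t μM |
    ∀ h ∈ M.crdaRH aC aH prev t μM, 0 ≤ M.U c h →
      ∀ b, prev h = some b → M.Vt h c t ≤ b}

/-- One period of Child Rotating Deferred Acceptance on the market given by active sets
`aC`, `aH`, where `prev h` records the time-discounted value of home `h`'s most recently
rejected placement (if any): first child-proposing DA (`μM`); if triggered, ROTATION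
re-runs child-proposing DA (`μR`) on the rotation sets, children excluded from the
rotation set become unmatched, and all other agents keep their MATCHING placements. -/
structure CRDAStep (M : Market C H) (aC : Set C) (aH : Set H)
    (prev : H → Option ℝ) (t : ℕ) where
  μM : Matching C H
  μR : Matching C H
  μ : Matching C H
  matching_opt : M.IsChildOptimalOn aC aH μM
  no_trigger : ¬ M.crdaTrigger prev t μM → μ = μM
  rot_opt : M.crdaTrigger prev t μM →
    M.IsChildOptimalOn (M.crdaRC aC aH prev t μM) (M.crdaRH aC aH prev t μM) μR
  final_rotC : M.crdaTrigger prev t μM →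
    ∀ c ∈ M.crdaRC aC aH prev t μM, μ.toHome c = μR.toHome c
  final_rotH : M.crdaTrigger prev t μM →
    ∀ h ∈ M.crdaRH aC aH prev t μM, μ.toChild h = μR.toChild h
  final_dropC : M.crdaTrigger prev t μM →
    ∀ c ∈ M.crdaHatRC aC aH prev t μM, c ∉ M.crdaRC aC aH prev t μM → μ.toHome c = none
  final_keepC : M.crdaTrigger prev t μM →
    ∀ c ∈ aC, c ∉ M.crdaHatRC aC aH prev t μM → μ.toHome c = μM.toHome c
  final_keepH : M.crdaTrigger prev t μM →
    ∀ h ∈ aH, h ∉ M.crdaRH aC aH prev t μM → μ.toChild h = μM.toChild h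

end Market

/-!
Envy of a child `c` towards a home `h` is a blocking pair, so it is excluded whenever `c` and `h`
end up matched by the same stable matching (MATCHING, or ROTATION on the rotation market), and an
unflagged child envies no acceptable home at all. The one mixed case is a rotated child envying a
home that keeps its MATCHING child; it blocks MATCHING as soon as rotated children never lose.

For that, suppose a rotated child strictly prefers her MATCHING home. Call a home gaining if it
strictly prefers its ROTATION child to its rotated MATCHING child. The ROTATION child of a gaining
home strictly prefers her own MATCHING home, which is again gaining; this injective self-map of the
finite set of gaining homes is onto. So handing the gaining homes back their MATCHING children
yields a matching, which is stable on the rotation market and better for the losing child,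
contradicting the child-optimality of ROTATION.
-/

namespace Matching

variable {C H : Type} (μ : Matching C H) {c c' : C} {h : H}

lemma toChild_of_toHome (hch : μ.toHome c = some h) : μ.toChild h = some c :=
  (μ.consistent c h).1 hch

lemma toHome_of_toChild (hch : μ.toChild h = some c) : μ.toHome c = some h :=
  (μ.consistent c h).2 hch

lemma eq_of_toHome_eq (h₁ : μ.toHome c = some h) (h₂ : μ.toHome c' = some h) : c = c' :=
  Option.mem_unique (μ.toChild_of_toHome h₁) (μ.toChild_of_toHome h₂)

open Classical in
noncomputable def piecewise (μ₁ μ₂ : Matching C H) (D : Set C) (K : Set H)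
    (h₁ : ∀ c h, μ₁.toHome c = some h → (c ∈ D ↔ h ∈ K))
    (h₂ : ∀ c h, μ₂.toHome c = some h → (c ∈ D ↔ h ∈ K)) : Matching C H where
  toHome c := if c ∈ D then μ₁.toHome c else μ₂.toHome c
  toChild h := if h ∈ K then μ₁.toChild h else μ₂.toChild h
  consistent c h := by
    have e₁ := h₁ c h
    have e₂ := h₂ c h
    rw [μ₁.consistent] at e₁
    rw [μ₂.consistent] at e₂
    by_cases hc : c ∈ D <;> by_cases hh : h ∈ K <;>
      simp only [hc, hh, if_true, if_false, μ₁.consistent, μ₂.consistent] <;> tauto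

variable {μ₁ μ₂ : Matching C H} {D : Set C} {K : Set H}
  {h₁ : ∀ c h, μ₁.toHome c = some h → (c ∈ D ↔ h ∈ K)}
  {h₂ : ∀ c h, μ₂.toHome c = some h → (c ∈ D ↔ h ∈ K)}

lemma piecewise_toHome_of_mem (hc : c ∈ D) :
    (piecewise μ₁ μ₂ D K h₁ h₂).toHome c = μ₁.toHome c :=
  if_pos hc

lemma piecewise_toHome_of_notMem (hc : c ∉ D) :
    (piecewise μ₁ μ₂ D K h₁ h₂).toHome c = μ₂.toHome c :=
  if_neg hc

lemma piecewise_toChild_of_mem (hh : h ∈ K) :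
    (piecewise μ₁ μ₂ D K h₁ h₂).toChild h = μ₁.toChild h :=
  if_pos hh

lemma piecewise_toChild_of_notMem (hh : h ∉ K) :
    (piecewise μ₁ μ₂ D K h₁ h₂).toChild h = μ₂.toChild h :=
  if_neg hh

end Matching

namespace Market

variable {C H : Type} (M : Market C H)

/-- Being unmatched counts as worse than any home; acceptability is a separate condition. -/
def PrefersHome (μ : Matching C H) (c : C) (h : H) : Prop :=
  ∀ h', μ.toHome c = some h' → M.U c h' < M.U c h

def PrefersChild (μ : Matching C H) (h : H) (c : C) : Prop :=
  ∀ c', μ.toChild h = some c' → M.V h c' < M.V h c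

structure StrictPrefs : Prop where
  U_ne : ∀ c h h', h ≠ h' → M.U c h ≠ M.U c h'
  V_ne : ∀ h c c', c ≠ c' → M.V h c ≠ M.V h c'

variable {M} {aC : Set C} {aH : Set H} {μ μ' : Matching C H} {c : C} {h h' : H}

lemma prefersHome_congr (e : μ.toHome c = μ'.toHome c) :
    M.PrefersHome μ c h ↔ M.PrefersHome μ' c h := by
  simp only [PrefersHome, e]

lemma prefersChild_congr (e : μ.toChild h = μ'.toChild h) :
    M.PrefersChild μ h c ↔ M.PrefersChild μ' h c := by
  simp only [PrefersChild, e]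

namespace IsStableOn

lemma exists_toHome_of_prefersChild (St : M.IsStableOn aC aH μ) (hc : c ∈ aC) (hh : h ∈ aH)
    (hU : 0 ≤ M.U c h) (hV : 0 ≤ M.V h c) (hpref : M.PrefersChild μ h c) :
    ∃ g, μ.toHome c = some g ∧ M.U c h ≤ M.U c g := by
  by_contra! hne
  exact St.2 c h hc hh hU hV ⟨hne, hpref⟩

lemma exists_toChild_of_prefersHome (St : M.IsStableOn aC aH μ) (hc : c ∈ aC) (hh : h ∈ aH)
    (hU : 0 ≤ M.U c h) (hV : 0 ≤ M.V h c) (hpref : M.PrefersHome μ c h) :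
    ∃ c', μ.toChild h = some c' ∧ M.V h c ≤ M.V h c' := by
  by_contra! hne
  exact St.2 c h hc hh hU hV ⟨hpref, hne⟩

lemma elim_toChild_nonneg (St : M.IsStableOn aC aH μ) (h : H) :
    0 ≤ (μ.toChild h).elim 0 (M.V h) := by
  cases e : μ.toChild h with
  | none => exact le_rfl
  | some c => exact (St.1 c h (μ.toHome_of_toChild e)).2.2.2

lemma not_envy (St : M.IsStableOn aC aH μ) (hc : c ∈ aC) (hh : h ∈ aH) (hU : 0 ≤ M.U c h')
    (hle : ∀ h₀, μ.toHome c = some h₀ → M.U c h₀ ≤ M.U c h') :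
    ¬ (M.U c h' < M.U c h ∧ (μ.toChild h).elim (0 : ℝ) (M.V h) < M.V h c) := by
  rintro ⟨hlt, hV⟩
  refine St.2 c h hc hh (hU.trans hlt.le) ((St.elim_toChild_nonneg h).trans hV.le)
    ⟨fun h₀ e => (hle h₀ e).trans_lt hlt, fun c' e => ?_⟩
  rwa [e] at hV

lemma not_envy_of_toHome (St : M.IsStableOn aC aH μ) (hc : c ∈ aC) (hh : h ∈ aH)
    (hmc : μ.toHome c = some h') :
    ¬ (M.U c h' < M.U c h ∧ (μ.toChild h).elim (0 : ℝ) (M.V h) < M.V h c) :=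
  St.not_envy hc hh (St.1 c h' hmc).2.2.1 fun _ e => Option.mem_unique hmc e ▸ le_rfl

end IsStableOn

variable (M) in
/-- The hypotheses relating MATCHING `μM` on `(aC, aH)` to ROTATION `μR` on `(RC, RH)`. -/
structure IsRotationStep (aC : Set C) (aH : Set H) (RC : Set C) (RH : Set H)
    (μM μR : Matching C H) : Prop where
  subset_C : RC ⊆ aC
  subset_H : RH ⊆ aH
  mapsTo : ∀ c g, c ∈ RC → μM.toHome c = some g → g ∈ RH
  stable : M.IsStableOn aC aH μM
  optimal : M.IsChildOptimalOn RC RH μR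

variable (M) in
def gainingHomes (RC : Set C) (μM μR : Matching C H) : Set H :=
  {g | ∃ x y, μM.toChild g = some x ∧ x ∈ RC ∧ μR.toChild g = some y ∧
    M.V g x < M.V g y}

variable (M) in
def losingChildren (RC : Set C) (μM μR : Matching C H) : Set C :=
  {d | ∃ g ∈ M.gainingHomes RC μM μR, μM.toHome d = some g}

namespace IsRotationStep

variable {RC : Set C} {RH : Set H} {μM μR : Matching C H} {g g₁ : H} {x y : C}

lemma mem_gainingHomes (R : M.IsRotationStep aC aH RC RH μM μR) (hS : M.StrictPrefs)
    (hc : c ∈ RC) (hg : μM.toHome c = some g) (hpref : M.PrefersHome μR c g) :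
    g ∈ M.gainingHomes RC μM μR := by
  obtain ⟨-, -, hU, hV⟩ := R.stable.1 c g hg
  obtain ⟨y, hy, hle⟩ :=
    R.optimal.1.exists_toChild_of_prefersHome hc (R.mapsTo c g hc hg) hU hV hpref
  have hne : c ≠ y := by
    rintro rfl
    exact lt_irrefl _ (hpref g (μR.toHome_of_toChild hy))
  exact ⟨c, y, μM.toChild_of_toHome hg, hc, hy, lt_of_le_of_ne hle (hS.V_ne g c y hne)⟩

lemma exists_matchingHome_mem_gainingHomes (R : M.IsRotationStep aC aH RC RH μM μR)
    (hS : M.StrictPrefs) (hg : g ∈ M.gainingHomes RC μM μR) (hy : μR.toChild g = some y) :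
    ∃ g₁ ∈ M.gainingHomes RC μM μR, μM.toHome y = some g₁ ∧ M.U y g < M.U y g₁ := by
  obtain ⟨x, y', hx, -, hy', hxy⟩ := hg
  obtain rfl : y = y' := Option.mem_unique hy hy'
  have hyg := μR.toHome_of_toChild hy
  obtain ⟨hyRC, hgRH, hU, hV⟩ := R.optimal.1.1 y g hyg
  have hpref : M.PrefersChild μM g y := fun c' e => Option.mem_unique hx e ▸ hxy
  obtain ⟨g₁, hyg₁, hle⟩ := R.stable.exists_toHome_of_prefersChild (R.subset_C hyRC)
    (R.subset_H hgRH) hU hV hpref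
  have hne : g ≠ g₁ := by
    rintro rfl
    obtain rfl : x = y := Option.mem_unique hx (μM.toChild_of_toHome hyg₁)
    exact lt_irrefl _ hxy
  have hlt := lt_of_le_of_ne hle (hS.U_ne y g g₁ hne)
  refine ⟨g₁, R.mem_gainingHomes hS hyRC hyg₁ fun h' e => ?_, hyg₁, hlt⟩
  obtain rfl : g = h' := Option.mem_unique hyg e
  exact hlt

lemma exists_rotationHome_mem_gainingHomes [Finite H] (R : M.IsRotationStep aC aH RC RH μM μR)
    (hS : M.StrictPrefs) (hg₁ : g₁ ∈ M.gainingHomes RC μM μR)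
    (hx : μM.toChild g₁ = some x) :
    ∃ g ∈ M.gainingHomes RC μM μR, μR.toHome x = some g := by
  set G := M.gainingHomes RC μM μR
  set f : H → H := fun g => ((μR.toChild g).bind μM.toHome).getD g
  have hf : ∀ g ∈ G,
      ∃ y, μR.toChild g = some y ∧ μM.toHome y = some (f g) ∧ f g ∈ G := by
    intro g hg
    obtain ⟨-, y, -, -, hy, -⟩ := id hg
    obtain ⟨g', hg', hyg', -⟩ := R.exists_matchingHome_mem_gainingHomes hS hg hy
    have hfg : f g = g' := by simp only [f, hy, Option.bind_some, hyg', Option.getD_some]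
    exact ⟨y, hy, hfg ▸ hyg', hfg ▸ hg'⟩
  have hmaps : Set.MapsTo f G G := fun g hg => by
    obtain ⟨-, -, -, hfg⟩ := hf g hg
    exact hfg
  have hinj : Set.InjOn f G := by
    intro g hg g' hg' e
    obtain ⟨y, hy, hyf, -⟩ := hf g hg
    obtain ⟨y', hy', hyf', -⟩ := hf g' hg'
    obtain rfl : y = y' := μM.eq_of_toHome_eq hyf (e ▸ hyf')
    exact Option.mem_unique (μR.toHome_of_toChild hy) (μR.toHome_of_toChild hy')
  obtain ⟨g, hg, rfl⟩ :=
    ((Set.toFinite G).injOn_iff_bijOn_of_mapsTo hmaps).1 hinj |>.surjOn hg₁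
  obtain ⟨y, hy, hyf, -⟩ := hf g hg
  obtain rfl : y = x := μM.eq_of_toHome_eq hyf (μM.toHome_of_toChild hx)
  exact ⟨g, hg, μR.toHome_of_toChild hy⟩

lemma mem_losingChildren_iff_of_matching (hd : μM.toHome x = some g) :
    x ∈ M.losingChildren RC μM μR ↔ g ∈ M.gainingHomes RC μM μR :=
  ⟨fun ⟨_, hg', e⟩ => Option.mem_unique hd e ▸ hg', fun hg => ⟨g, hg, hd⟩⟩

lemma mem_losingChildren_iff_of_rotation [Finite H] (R : M.IsRotationStep aC aH RC RH μM μR)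
    (hS : M.StrictPrefs) (hd : μR.toHome x = some g) :
    x ∈ M.losingChildren RC μM μR ↔ g ∈ M.gainingHomes RC μM μR := by
  constructor
  · rintro ⟨g₁, hg₁, e₁⟩
    obtain ⟨g', hg', e'⟩ :=
      R.exists_rotationHome_mem_gainingHomes hS hg₁ (μM.toChild_of_toHome e₁)
    exact Option.mem_unique hd e' ▸ hg'
  · intro hg
    obtain ⟨g₁, hg₁, e₁, -⟩ :=
      R.exists_matchingHome_mem_gainingHomes hS hg (μR.toChild_of_toHome hd)
    exact ⟨g₁, hg₁, e₁⟩

noncomputable def swap [Finite H] (R : M.IsRotationStep aC aH RC RH μM μR)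
    (hS : M.StrictPrefs) : Matching C H :=
  μM.piecewise μR (M.losingChildren RC μM μR) (M.gainingHomes RC μM μR)
    (fun _ _ => mem_losingChildren_iff_of_matching)
    (fun _ _ => R.mem_losingChildren_iff_of_rotation hS)

lemma prefersHome_of_prefersHome_swap [Finite H] (R : M.IsRotationStep aC aH RC RH μM μR)
    (hS : M.StrictPrefs) (hpref : M.PrefersHome (R.swap hS) c h) : M.PrefersHome μR c h := by
  by_cases hL : c ∈ M.losingChildren RC μM μR
  · intro g hcg
    have hg := (R.mem_losingChildren_iff_of_rotation hS hcg).1 hL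
    obtain ⟨g₁, -, hcg₁, hlt⟩ :=
      R.exists_matchingHome_mem_gainingHomes hS hg (μR.toChild_of_toHome hcg)
    exact hlt.trans (hpref g₁ ((Matching.piecewise_toHome_of_mem hL).trans hcg₁))
  · exact (prefersHome_congr (Matching.piecewise_toHome_of_notMem hL)).1 hpref

lemma isStableOn_swap [Finite H] (R : M.IsRotationStep aC aH RC RH μM μR)
    (hS : M.StrictPrefs) : M.IsStableOn RC RH (R.swap hS) := by
  refine ⟨fun d g e => ?_, fun c h hc hh hU hV ⟨hpc, hph⟩ => ?_⟩
  · by_cases hL : d ∈ M.losingChildren RC μM μR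
    · rw [swap, Matching.piecewise_toHome_of_mem hL] at e
      obtain ⟨x, -, hx, hxRC, -⟩ := mem_losingChildren_iff_of_matching e |>.1 hL
      obtain rfl : x = d := μM.eq_of_toHome_eq (μM.toHome_of_toChild hx) e
      exact ⟨hxRC, R.mapsTo x g hxRC e, (R.stable.1 x g e).2.2⟩
    · rw [swap, Matching.piecewise_toHome_of_notMem hL] at e
      exact R.optimal.1.1 d g e
  have hpcR := R.prefersHome_of_prefersHome_swap hS hpc
  by_cases hG : h ∈ M.gainingHomes RC μM μR
  · have hphM := (prefersChild_congr (Matching.piecewise_toChild_of_mem hG)).1 hph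
    obtain ⟨g, hcg, hle⟩ := R.stable.exists_toHome_of_prefersChild (R.subset_C hc)
      (R.subset_H hh) hU hV hphM
    have hL : c ∈ M.losingChildren RC μM μR :=
      ⟨g, R.mem_gainingHomes hS hc hcg fun h' e => (hpcR h' e).trans_le hle, hcg⟩
    exact R.stable.2 c h (R.subset_C hc) (R.subset_H hh) hU hV
      ⟨(prefersHome_congr (Matching.piecewise_toHome_of_mem hL)).1 hpc, hphM⟩
  · exact R.optimal.1.2 c h hc hh hU hV
      ⟨hpcR, (prefersChild_congr (Matching.piecewise_toChild_of_notMem hG)).1 hph⟩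

theorem utility_matching_le_rotation [Finite H] (R : M.IsRotationStep aC aH RC RH μM μR)
    (hS : M.StrictPrefs) {h₀ : H} (hc : c ∈ RC) (hM : μM.toHome c = some h₀)
    (hR : μR.toHome c = some h') :
    M.U c h₀ ≤ M.U c h' := by
  by_contra! hlt
  have hG : h₀ ∈ M.gainingHomes RC μM μR := R.mem_gainingHomes hS hc hM fun h'' e =>
    Option.mem_unique hR e ▸ hlt
  have hL : c ∈ M.losingChildren RC μM μR := ⟨h₀, hG, hM⟩
  obtain ⟨h'', e, hle⟩ := R.optimal.2 (R.swap hS) (R.isStableOn_swap hS) c h₀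
    ((Matching.piecewise_toHome_of_mem hL).trans hM)
  obtain rfl : h' = h'' := Option.mem_unique hR e
  exact hle.not_gt hlt

end IsRotationStep

namespace CRDAStep

variable {prev : H → Option ℝ} {t : ℕ} (S : M.CRDAStep aC aH prev t)

lemma isRotationStep (T : M.crdaTrigger prev t S.μM) :
    M.IsRotationStep aC aH (M.crdaRC aC aH prev t S.μM) (M.crdaRH aC aH prev t S.μM)
      S.μM S.μR where
  subset_C _ hc := hc.1.1
  subset_H _ hh := hh.1
  mapsTo c g hc hg :=
    ⟨(S.matching_opt.1.1 c g hg).2.1, Or.inl ⟨c, hc.1, S.μM.toChild_of_toHome hg⟩⟩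
  stable := S.matching_opt.1
  optimal := S.rot_opt T

lemma elim_toChild_nonneg (hh : h ∈ aH) : 0 ≤ (S.μ.toChild h).elim 0 (M.V h) := by
  by_cases T : M.crdaTrigger prev t S.μM
  · by_cases hR : h ∈ M.crdaRH aC aH prev t S.μM
    · exact S.final_rotH T h hR ▸ (S.rot_opt T).1.elim_toChild_nonneg h
    · exact S.final_keepH T h hh hR ▸ S.matching_opt.1.elim_toChild_nonneg h
  · exact S.no_trigger T ▸ S.matching_opt.1.elim_toChild_nonneg h

end CRDAStep

end Market

theorem crda_justifiedEnvyFree_general {C H : Type} [Finite H] (M : Market C H)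
    (aC : Set C) (aH : Set H) (prev : H → Option ℝ) (t : ℕ)
    (S : Market.CRDAStep M aC aH prev t)
    (strictU : ∀ c h h', h ≠ h' → M.U c h ≠ M.U c h')
    (strictV : ∀ h c c', c ≠ c' → M.V h c ≠ M.V h c')
    (c : C) (h : H) (hc : c ∈ aC) (hh : h ∈ aH) (h' : H)
    (hmc : S.μ.toHome c = some h') :
    ¬ (M.U c h' < M.U c h ∧ (S.μ.toChild h).elim (0 : ℝ) (M.V h) < M.V h c) := by
  have hS : M.StrictPrefs := ⟨strictU, strictV⟩
  have SM := S.matching_opt.1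
  by_cases T : M.crdaTrigger prev t S.μM
  swap
  · rw [S.no_trigger T] at hmc ⊢
    exact SM.not_envy_of_toHome hc hh hmc
  by_cases hcHat : c ∈ M.crdaHatRC aC aH prev t S.μM
  swap
  · rintro ⟨hU, hV⟩
    have hmcM := (S.final_keepC T c hc hcHat).symm.trans hmc
    refine hcHat ⟨hc, Or.inl (Or.inl ⟨h, hh, (S.elim_toChild_nonneg hh).trans hV.le, ?_⟩)⟩
    exact fun h'' e => Option.mem_unique hmcM e ▸ hU
  have hcRC : c ∈ M.crdaRC aC aH prev t S.μM := by
    by_contra hcRC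
    simp [S.final_dropC T c hcHat hcRC] at hmc
  have hmcR := (S.final_rotC T c hcRC).symm.trans hmc
  have SR := (S.rot_opt T).1
  by_cases hhRH : h ∈ M.crdaRH aC aH prev t S.μM
  · rw [S.final_rotH T h hhRH]
    exact SR.not_envy_of_toHome hcRC hhRH hmcR
  · rw [S.final_keepH T h hh hhRH]
    exact SM.not_envy hc hh (SR.1 c h' hmcR).2.2.1 fun _ e =>
      (S.isRotationStep T).utility_matching_le_rotation hS hcRC e hmcR

/-- Theorem 3 (justified envy-freeness, incl. Remark 2): in any period of CRDA
(on active sets `aC`, `aH`, with `prev` recording homes' most recently rejected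
placement values), there is no matched child `c` and home `h` (matched or unmatched,
with unmatched utility 0) with justified envy. -/
theorem crda_justifiedEnvyFree {C H : Type} [Finite C] [Finite H] (M : Market C H)
    (aC : Set C) (aH : Set H) (prev : H → Option ℝ) (t : ℕ)
    (S : Market.CRDAStep M aC aH prev t)
    (strictU : ∀ c h h', h ≠ h' → M.U c h ≠ M.U c h')
    (strictV : ∀ h c c', c ≠ c' → M.V h c ≠ M.V h c')
    (c : C) (h : H) (hc : c ∈ aC) (hh : h ∈ aH) (h' : H)
    (hmc : S.μ.toHome c = some h') :
    ¬ (M.U c h' < M.U c h ∧ (S.μ.toChild h).elim (0 : ℝ) (M.V h) < M.V h c) :=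
  crda_justifiedEnvyFree_general M aC aH prev t S strictU strictV c h hc hh h' hmc
end

section
/- CRDA is strictly non-wasteful provided that at every time t and action profile there exists an h-perfect stable matching on the rotation sets R_H^t and R_C^t (a stable matching in which every home in R_H^t is matched): under this hypothesis no active acceptable child-home pair can both remain unmatched. -/
/-- In a one-to-one matching, matched children and matched homes are in bijection. -/
lemma Matching.ncard_matched_eq {C H : Type} [Finite C] [Finite H] (μ : Matching C H) :
    {c | μ.toHome c ≠ none}.ncard = {h | μ.toChild h ≠ none}.ncard := by
  classical
  have e : {c | μ.toHome c ≠ none} ≃ {h | μ.toChild h ≠ none} :=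
    { toFun := fun c => ⟨(μ.toHome c.1).get (Option.ne_none_iff_isSome.mp c.2), by
        have h1 : μ.toHome c.1 = some ((μ.toHome c.1).get (Option.ne_none_iff_isSome.mp c.2)) :=
          (Option.some_get _).symm
        have := (μ.consistent c.1 _).mp h1
        simp [Set.mem_setOf_eq, this]⟩
      invFun := fun h => ⟨(μ.toChild h.1).get (Option.ne_none_iff_isSome.mp h.2), by
        have h1 : μ.toChild h.1 = some ((μ.toChild h.1).get (Option.ne_none_iff_isSome.mp h.2)) :=
          (Option.some_get _).symm
        have := (μ.consistent _ h.1).mpr h1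
        simp [Set.mem_setOf_eq, this]⟩
      left_inv := by
        rintro ⟨c, hc⟩
        have h1 : μ.toHome c = some ((μ.toHome c).get (Option.ne_none_iff_isSome.mp hc)) :=
          (Option.some_get _).symm
        have h2 := (μ.consistent c _).mp h1
        simp only [Subtype.mk.injEq]
        simp [h2]
      right_inv := by
        rintro ⟨h, hh⟩
        have h1 : μ.toChild h = some ((μ.toChild h).get (Option.ne_none_iff_isSome.mp hh)) :=
          (Option.some_get _).symm
        have h2 := (μ.consistent _ h).mpr h1
        simp only [Subtype.mk.injEq]
        simp [h2] }
  rw [← Nat.card_coe_set_eq, ← Nat.card_coe_set_eq]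
  exact Nat.card_congr e

/-- Remark (strict non-wastefulness of CRDA): if there exists an `h`-perfect stable
matching on the rotation sets `R_H^t` and `R_C^t`, then no active acceptable
child-home pair can both remain unmatched in that period. -/
theorem crda_strictlyNonWasteful_of_hPerfect {C H : Type} [Finite C] [Finite H]
    (M : Market C H) (aC : Set C) (aH : Set H) (prev : H → Option ℝ) (t : ℕ)
    (S : Market.CRDAStep M aC aH prev t)
    (strictU : ∀ c h h', h ≠ h' → M.U c h ≠ M.U c h')
    (strictV : ∀ h c c', c ≠ c' → M.V h c ≠ M.V h c')
    (hperf : ∃ μS : Matching C H,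
      M.IsStableOn (M.crdaRC aC aH prev t S.μM) (M.crdaRH aC aH prev t S.μM) μS ∧
      ∀ h ∈ M.crdaRH aC aH prev t S.μM, μS.toChild h ≠ none) :
    ¬ ∃ c h, c ∈ aC ∧ h ∈ aH ∧ 0 ≤ M.U c h ∧ 0 ≤ M.V h c ∧
      S.μ.toHome c = none ∧ S.μ.toChild h = none := by
  classical
  rintro ⟨c, h, hcA, hhA, hU, hV, hcm, hhm⟩
  by_cases htrig : M.crdaTrigger prev t S.μM
  · -- trigger case: h must lie in R_H, and the Rural-Hospitals counting argument applies
    set RC := M.crdaRC aC aH prev t S.μM with hRC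
    set RH := M.crdaRH aC aH prev t S.μM with hRH
    -- h ∈ RH
    have hhRH : h ∈ RH := by
      by_contra hnot
      have hkeep := S.final_keepH htrig h hhA hnot
      have : S.μM.toChild h = none := hkeep ▸ hhm
      exact hnot ⟨hhA, Or.inr this⟩
    have hμR : S.μR.toChild h = none := (S.final_rotH htrig h hhRH) ▸ hhm
    obtain ⟨μS, hSstab, hSperf⟩ := hperf
    obtain ⟨hRopt, hRbest⟩ := S.rot_opt htrig
    -- matched sets
    set mcS : Set C := {c | μS.toHome c ≠ none} with hmcS
    set mcR : Set C := {c | S.μR.toHome c ≠ none} with hmcR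
    set mhS : Set H := {h | μS.toChild h ≠ none} with hmhS
    set mhR : Set H := {h | S.μR.toChild h ≠ none} with hmhR
    have hsub1 : mcS ⊆ mcR := by
      intro c' hc'
      obtain ⟨h', hh'⟩ := Option.ne_none_iff_exists'.mp hc'
      obtain ⟨h'', hh'', _⟩ := hRbest μS hSstab c' h' hh'
      simp [hmcR, Set.mem_setOf_eq, hh'']
    have hsub2 : mhR ⊆ RH := by
      intro h' hh'
      obtain ⟨c', hc'⟩ := Option.ne_none_iff_exists'.mp hh'
      have := (S.μR.consistent c' h').mpr hc'
      exact (hRopt.1 c' h' this).2.1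
    have hsub3 : mhS ⊆ RH := by
      intro h' hh'
      obtain ⟨c', hc'⟩ := Option.ne_none_iff_exists'.mp hh'
      have := (μS.consistent c' h').mpr hc'
      exact (hSstab.1 c' h' this).2.1
    have hsub4 : RH ⊆ mhS := fun h' hh' => hSperf h' hh'
    have hmhSeq : mhS = RH := le_antisymm hsub3 hsub4
    have hcard1 : RH.ncard ≤ mhR.ncard := by
      calc RH.ncard = mhS.ncard := by rw [hmhSeq]
        _ = mcS.ncard := (Matching.ncard_matched_eq μS).symm
        _ ≤ mcR.ncard := Set.ncard_le_ncard hsub1 (Set.toFinite _)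
        _ = mhR.ncard := Matching.ncard_matched_eq S.μR
    have heq : mhR = RH :=
      Set.eq_of_subset_of_ncard_le hsub2 hcard1 (Set.toFinite _)
    have : h ∈ mhR := heq ▸ hhRH
    exact this hμR
  · -- no trigger: μ = μM is stable on (aC, aH), contradicting the unmatched pair
    have hμ := S.no_trigger htrig
    have hstab := S.matching_opt.1
    have hcm' : S.μM.toHome c = none := hμ ▸ hcm
    have hhm' : S.μM.toChild h = none := hμ ▸ hhm
    exact hstab.2 c h hcA hhA hU hV
      ⟨fun h' hh' => by simp [hcm'] at hh', fun c' hc' => by simp [hhm'] at hc'⟩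
end

section
/- Home Endowed Deferred Acceptance (HEDA) is patience-free: for any time t, home h, and action profile with μ_t(h) ≠ h, and any t' > t, the counterfactual placement satisfies V_h^t(μ_t(h)) ≥ V_h^{t'}(μ̂_{t'}(h)). -/
/-- An endowment structure: `N+1` nonempty, compact, strictly ordered intervals
spanning `[Vmin, Vmax]`, with every element of `E i` strictly above every element
of `E (i+1)`. -/
structure Endowment (N : ℕ) (Vmin Vmax : ℝ) where
  E : ℕ → Set ℝ
  compact : ∀ i ≤ N, IsCompact (E i)
  nonempty : ∀ i ≤ N, (E i).Nonempty
  subset : ∀ i ≤ N, E i ⊆ Set.Icc Vmin Vmax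
  ordered : ∀ i < N, ∀ x ∈ E i, ∀ y ∈ E (i + 1), y < x
  covers : ∀ x ∈ Set.Icc Vmin Vmax, ∃ i ≤ N, x ∈ E i

namespace Market

variable {C H : Type}

/-- The time-dependent endowment `B_t(h)` of home `h`. -/
noncomputable def Bend (M : Market C H) {N : ℕ} {Vmin Vmax : ℝ}
    (Ew : Endowment N Vmin Vmax) (h : H) (t : ℕ) : Set ℝ :=
  if t - M.arrH h ≤ N then Ew.E (t - M.arrH h) else {Vmin}

/-- Stability with respect to the endowment-modified preferences: a child is acceptable
to a home only if her time-discounted utility lies in the home's current endowment. -/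
noncomputable def IsStableEnd (M : Market C H) {N : ℕ} {Vmin Vmax : ℝ}
    (Ew : Endowment N Vmin Vmax) (aC : Set C) (aH : Set H) (t : ℕ)
    (μ : Matching C H) : Prop :=
  (∀ c h, μ.toHome c = some h → c ∈ aC ∧ h ∈ aH ∧ 0 ≤ M.U c h ∧ 0 ≤ M.V h c ∧
    M.Vt h c t ∈ M.Bend Ew h t) ∧
  (∀ c h, c ∈ aC → h ∈ aH → 0 ≤ M.U c h → 0 ≤ M.V h c → M.Vt h c t ∈ M.Bend Ew h t →
    ¬ ((∀ h', μ.toHome c = some h' → M.U c h' < M.U c h) ∧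
       (∀ c', μ.toChild h = some c' → M.V h c' < M.V h c)))

/-- Characterization of Home Endowed Deferred Acceptance: each period it produces the
home-optimal stable matching on the active agents with respect to the
endowment-modified preferences; it is a deterministic function of the history. -/
structure IsHEDA (M : Market C H) {N : ℕ} {Vmin Vmax : ℝ}
    (Ew : Endowment N Vmin Vmax) (Q : Mechanism C H) : Prop where
  stableStep : ∀ a t,
    M.IsStableEnd Ew {c | M.activeC Q a c t} {h | M.activeH Q a h t} t (Q a t)
  homeOpt : ∀ a t μ',
    M.IsStableEnd Ew {c | M.activeC Q a c t} {h | M.activeH Q a h t} t μ' →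
    ∀ h c', μ'.toChild h = some c' →
      ∃ c, (Q a t).toChild h = some c ∧ M.V h c' ≤ M.V h c
  histDet : M.historyDetermined Q

end Market

/-!
Every offer HEDA makes at time `t` has time-discounted value in the endowment `B_t(h)`. Once
`h` has arrived (which being matched at `t` guarantees), its endowments only go down: strictly
through the intervals `E_i`, then they stay at `{Vmin}`, which lies below all of them. Hence
any offer at a later `t'` is worth at most the one at `t`.
-/

namespace Endowment

variable {N : ℕ} {Vmin Vmax : ℝ} (Ew : Endowment N Vmin Vmax)

theorem lt_of_mem_of_lt {i j : ℕ} (hij : i < j) (hjN : j ≤ N) {x y : ℝ}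
    (hx : x ∈ Ew.E i) (hy : y ∈ Ew.E j) : y < x := by
  induction j, hij using Nat.le_induction generalizing y with
  | base => exact Ew.ordered i hjN x hx y hy
  | succ j hij ih =>
    obtain ⟨z, hz⟩ := Ew.nonempty j (by omega)
    exact (Ew.ordered j hjN z hz y hy).trans (ih (by omega) hz)

theorem Vmin_le {i : ℕ} (hi : i ≤ N) {x : ℝ} (hx : x ∈ Ew.E i) : Vmin ≤ x :=
  (Ew.subset i hi hx).1

end Endowment

namespace Market

variable {C H : Type} (M : Market C H) {N : ℕ} {Vmin Vmax : ℝ} (Ew : Endowment N Vmin Vmax)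

theorem le_of_mem_Bend_of_lt {h : H} {t t' : ℕ} (harr : M.arrH h ≤ t) (htt' : t < t')
    {x y : ℝ} (hx : x ∈ M.Bend Ew h t) (hy : y ∈ M.Bend Ew h t') : y ≤ x := by
  unfold Bend at hx hy
  split_ifs at hx hy with ht ht'
  · exact (Ew.lt_of_mem_of_lt (by omega) ht' hx hy).le
  · rw [Set.mem_singleton_iff.mp hy]
    exact Ew.Vmin_le ht hx
  · omega
  · rw [Set.mem_singleton_iff.mp hx, Set.mem_singleton_iff.mp hy]

namespace IsStableEnd

variable {M Ew} {aC : Set C} {aH : Set H} {t : ℕ} {μ : Matching C H} {h : H} {c : C}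

theorem mem_homes (hμ : M.IsStableEnd Ew aC aH t μ) (hc : μ.toChild h = some c) : h ∈ aH :=
  (hμ.1 c h ((μ.consistent c h).mpr hc)).2.1

theorem Vt_mem_Bend (hμ : M.IsStableEnd Ew aC aH t μ) (hc : μ.toChild h = some c) :
    M.Vt h c t ∈ M.Bend Ew h t :=
  (hμ.1 c h ((μ.consistent c h).mpr hc)).2.2.2.2

end IsStableEnd

end Market

/-- Theorem 5 (patience-freeness part): Home Endowed Deferred Acceptance is
patience-free. -/
theorem heda_patienceFree {C H : Type} (M : Market C H) {N : ℕ} {Vmin Vmax : ℝ}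
    (Ew : Endowment N Vmin Vmax) (Q : Mechanism C H) (hQ : M.IsHEDA Ew Q) :
    M.patienceFree Q := by
  intro a t h c hc t' htt' c' hc'
  have hstable := hQ.stableStep a t
  exact M.le_of_mem_Bend_of_lt Ew (hstable.mem_homes hc).1 htt'
    (hstable.Vt_mem_Bend hc) ((hQ.stableStep _ t').Vt_mem_Bend hc')
end

section
/- Sequential Deferred Acceptance (running home-proposing DA independently each period on the current market) is justified envy-free, individually rational, and strictly non-wasteful at every period and action profile, but it is neither patience-free nor strategy-proof. -/
/-- A mechanism that also takes homes' acceptability reports as input. -/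
abbrev ReportMechanism (C H : Type) := (H → C → Bool) → Mechanism C H

namespace Market

variable {C H : Type}

/-- The market with the matchmaker's constructed (reported) home preferences:
the true utility if the home reports the child acceptable, `-1` otherwise. -/
noncomputable def reported (M : Market C H) (σ : H → C → Bool) : Market C H :=
  { M with V := fun h c => if σ h c then M.V h c else -1 }

/-- Strategy-proofness: truthful acceptability reporting together with accepting every
offered placement weakly dominates every alternative (report, action-profile) pair of a
home, in realized true time-discounted payoff. -/
noncomputable def strategyProofR (M : Market C H) (Q : ReportMechanism C H) : Prop :=
  ∀ (h : H) (σ σ' : H → C → Bool) (a a' : Actions H),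
    (∀ c, σ h c = true ↔ 0 ≤ M.V h c) →
    (∀ k, a h k = true) →
    (∀ h', h' ≠ h → σ' h' = σ h') →
    (∀ h', h' ≠ h → a' h' = a h') →
    ∀ x y, M.payoffIs (Q σ) a h x → M.payoffIs (Q σ') a' h y → y ≤ x

end Market

namespace Market

variable {C H : Type}

/-- Characterization of Sequential Deferred Acceptance: each period it outputs the
home-optimal stable matching on the current active sets (independently of history). -/
structure IsSeqDA (M : Market C H) (Q : Mechanism C H) : Prop where
  stable : ∀ a t, M.IsStableOn {c | M.activeC Q a c t} {h | M.activeH Q a h t} (Q a t)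
  homeOpt : ∀ a t μ',
    M.IsStableOn {c | M.activeC Q a c t} {h | M.activeH Q a h t} μ' →
    ∀ h c', μ'.toChild h = some c' →
      ∃ c, (Q a t).toChild h = some c ∧ M.V h c' ≤ M.V h c

end Market
/-!
Sequential DA outputs a stable matching of the current market, and stability alone gives
justified envy-freeness, individual rationality and strict non-wastefulness.

For the two failures take one home and two children: child `false`, worth `0` to the home,
is present from period `0`, and child `true`, worth `2`, arrives in period `1`; waiting costs
the home `1` per period. With a single home every arrived child is active as long as the home
is, so DA simply offers the home its favourite acceptable arrived child. It offers `false` in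
period `0` (discounted value `0`), whereas a home that rejects it is offered `true` in period `1`
(discounted value `1`).
-/

namespace Market

variable {C H : Type} {M : Market C H} {aC : Set C} {aH : Set H} {μ : Matching C H}

theorem IsStableOn.acceptable (hμ : M.IsStableOn aC aH μ) {c : C} {h : H}
    (hch : μ.toHome c = some h) : 0 ≤ M.U c h ∧ 0 ≤ M.V h c :=
  (hμ.1 c h hch).2.2

theorem IsStableOn.not_justifiedEnvy (hμ : M.IsStableOn aC aH μ) {c : C} {h h' : H} {c' : C}
    (hc : μ.toHome c = some h') (hh : μ.toChild h = some c') :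
    ¬ (M.U c h' < M.U c h ∧ M.V h c' < M.V h c) := by
  rintro ⟨hU, hV⟩
  obtain ⟨hcC, -, hU', -⟩ := hμ.1 c h' hc
  obtain ⟨-, hhH, -, hV'⟩ := hμ.1 c' h ((μ.consistent c' h).mpr hh)
  refine hμ.2 c h hcC hhH (hU'.trans hU.le) (hV'.trans hV.le) ⟨?_, ?_⟩
  · intro _ hc'
    cases hc.symm.trans hc'
    exact hU
  · intro _ hh'
    cases hh.symm.trans hh'
    exact hV

theorem IsStableOn.not_unmatched_acceptable (hμ : M.IsStableOn aC aH μ) {c : C} {h : H}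
    (hc : c ∈ aC) (hh : h ∈ aH) (hU : 0 ≤ M.U c h) (hV : 0 ≤ M.V h c)
    (hc₀ : μ.toHome c = none) (hh₀ : μ.toChild h = none) : False :=
  hμ.2 c h hc hh hU hV ⟨by simp [hc₀], by simp [hh₀]⟩

variable {Q : Mechanism C H}

theorem IsSeqDA.justifiedEnvyFree (hQ : M.IsSeqDA Q) : M.justifiedEnvyFree Q :=
  fun a t _ _ _ _ hc hh => (hQ.stable a t).not_justifiedEnvy hc hh

theorem IsSeqDA.individuallyRational (hQ : M.IsSeqDA Q) : M.individuallyRational Q :=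
  fun a t _ _ hch => (hQ.stable a t).acceptable hch

theorem IsSeqDA.strictlyNonWasteful (hQ : M.IsSeqDA Q) : M.strictlyNonWasteful Q :=
  fun a t ⟨_, _, hc, hh, hU, hV, hc₀, hh₀⟩ =>
    (hQ.stable a t).not_unmatched_acceptable hc hh hU hV hc₀ hh₀

end Market

namespace Matching

variable {C : Type} [DecidableEq C]

def ofOption (o : Option C) : Matching C Unit where
  toHome c := if o = some c then some () else none
  toChild _ := o
  consistent c h := by cases h; split_ifs <;> simp [*]

@[simp]
theorem ofOption_toChild (o : Option C) (h : Unit) : (ofOption o).toChild h = o := rfl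

@[simp]
theorem ofOption_toHome_eq_some {o : Option C} {c : C} {h : Unit} :
    (ofOption o).toHome c = some h ↔ o = some c :=
  (ofOption o).consistent c h

end Matching

section OneHome

variable {C : Type} [DecidableEq C]

/-- Stated through the offers rather than through `oneHomeMech`'s own matchings, so that
`oneHomeMech` is not defined circularly; `activeH_oneHomeMech_iff` shows the two agree. -/
def acceptedBefore (offer : ℕ → Option C) (a : Actions Unit) (t : ℕ) : Prop :=
  ∃ k < t, (offer k).isSome ∧ a () k = true

open scoped Classical in
noncomputable def oneHomeMech (offer : ℕ → Option C) : Mechanism C Unit := fun a t =>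
  Matching.ofOption (if acceptedBefore offer a t then none else offer t)

def Market.IsBestOffer (M : Market C Unit) (offer : ℕ → Option C) (t : ℕ) : Prop :=
  (∀ c, offer t = some c → M.arrH () ≤ t ∧ M.arrC c ≤ t ∧ 0 ≤ M.U c () ∧ 0 ≤ M.V () c) ∧
  (∀ c, M.arrH () ≤ t → M.arrC c ≤ t → 0 ≤ M.U c () → 0 ≤ M.V () c →
    ∃ c₀, offer t = some c₀ ∧ M.V () c ≤ M.V () c₀)

variable {offer : ℕ → Option C} {a : Actions Unit} {t : ℕ}

theorem oneHomeMech_toChild_of_not_acceptedBefore (h : ¬ acceptedBefore offer a t) :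
    (oneHomeMech offer a t).toChild () = offer t := by
  simp [oneHomeMech, h]

theorem oneHomeMech_toHome_eq_some {c : C} {h : Unit} :
    (oneHomeMech offer a t).toHome c = some h ↔
      ¬ acceptedBefore offer a t ∧ offer t = some c := by
  simp [oneHomeMech]

theorem exists_accepted_oneHomeMech_of_acceptedBefore (h : acceptedBefore offer a t) :
    ∃ k < t, (oneHomeMech offer a k).toChild () ≠ none ∧ a () k = true := by
  classical
  have hex : ∃ k, (offer k).isSome ∧ a () k = true := h.imp fun _ hk => hk.2
  obtain ⟨k, hkt, hk⟩ := h
  have hfirst : ¬ acceptedBefore offer a (Nat.find hex) :=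
    fun ⟨j, hj, hj'⟩ => Nat.find_min hex hj hj'
  refine ⟨Nat.find hex, (Nat.find_min' hex hk).trans_lt hkt, ?_, (Nat.find_spec hex).2⟩
  rw [oneHomeMech_toChild_of_not_acceptedBefore hfirst, ← Option.isSome_iff_ne_none]
  exact (Nat.find_spec hex).1

theorem Market.activeH_oneHomeMech_iff {M : Market C Unit} :
    M.activeH (oneHomeMech offer) a () t ↔ M.arrH () ≤ t ∧ ¬ acceptedBefore offer a t := by
  refine and_congr_right fun _ =>
    not_congr ⟨?_, exists_accepted_oneHomeMech_of_acceptedBefore⟩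
  rintro ⟨k, hk, hoffer, ha⟩
  by_cases hacc : acceptedBefore offer a k
  · obtain ⟨j, hj, hj'⟩ := hacc
    exact ⟨j, hj.trans hk, hj'⟩
  · rw [oneHomeMech_toChild_of_not_acceptedBefore hacc, ← Option.isSome_iff_ne_none] at hoffer
    exact ⟨k, hk, hoffer, ha⟩

theorem Market.activeC_oneHomeMech {M : Market C Unit} {c : C}
    (hacc : ¬ acceptedBefore offer a t) (hc : M.arrC c ≤ t) :
    M.activeC (oneHomeMech offer) a c t := by
  refine ⟨hc, fun ⟨k, hk, _, hQ, ha⟩ => hacc ⟨k, hk, ?_, ha⟩⟩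
  obtain ⟨-, hoffer⟩ := oneHomeMech_toHome_eq_some.mp hQ
  simp [hoffer]

theorem Market.isSeqDA_oneHomeMech {M : Market C Unit} (hbest : ∀ t, M.IsBestOffer offer t) :
    M.IsSeqDA (oneHomeMech offer) := by
  refine ⟨fun a t => ⟨?_, ?_⟩, ?_⟩
  · rintro c ⟨⟩ hch
    obtain ⟨hacc, hoffer⟩ := oneHomeMech_toHome_eq_some.mp hch
    obtain ⟨hH, hC, hU, hV⟩ := (hbest t).1 c hoffer
    exact ⟨activeC_oneHomeMech hacc hC, activeH_oneHomeMech_iff.mpr ⟨hH, hacc⟩, hU, hV⟩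
  · rintro c ⟨⟩ hc hh hU hV ⟨-, hblock⟩
    obtain ⟨hH, hacc⟩ := activeH_oneHomeMech_iff.mp hh
    obtain ⟨c₀, hoffer, hle⟩ := (hbest t).2 c hH hc.1 hU hV
    rw [← oneHomeMech_toChild_of_not_acceptedBefore hacc] at hoffer
    exact (hblock c₀ hoffer).not_ge hle
  · rintro a t μ hμ ⟨⟩ c hc
    obtain ⟨hcC, hh, hU, hV⟩ := hμ.1 c () ((μ.consistent c ()).mpr hc)
    obtain ⟨hH, hacc⟩ := activeH_oneHomeMech_iff.mp hh
    rw [oneHomeMech_toChild_of_not_acceptedBefore hacc]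
    exact (hbest t).2 c hH hcC.1 hU hV

end OneHome

namespace SeqDACounterexample

noncomputable def market : Market Bool Unit where
  U _ _ := 0
  V _ c := cond c 2 0
  arrC c := cond c 1 0
  arrH _ := 0
  wC := 0
  wH := 1

/-- DA's offer to the home when it reports the children `c` with `s c` acceptable. -/
def offer (s : Bool → Bool) (t : ℕ) : Option Bool :=
  if 1 ≤ t ∧ s true then some true else if s false then some false else none

noncomputable def mech : ReportMechanism Bool Unit := fun σ => oneHomeMech (offer (σ ()))

theorem isBestOffer_offer (σ : Unit → Bool → Bool) (t : ℕ) :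
    (market.reported σ).IsBestOffer (offer (σ ())) t := by
  rcases hf : σ () false <;> rcases ht : σ () true <;>
    simp [Market.IsBestOffer, offer, Market.reported, market, hf, ht, Bool.forall_bool]
  omega

theorem isSeqDA_mech (σ : Unit → Bool → Bool) : (market.reported σ).IsSeqDA (mech σ) :=
  Market.isSeqDA_oneHomeMech (isBestOffer_offer σ)

theorem reported_truthful : market.reported (fun _ _ => true) = market := rfl

theorem mech_truthful_toChild_zero (a : Actions Unit) :
    (mech (fun _ _ => true) a 0).toChild () = some false := by
  simp [mech, oneHomeMech, acceptedBefore, offer]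

noncomputable def waitProfile : Actions Unit := cfProfile (fun _ _ => true) () 1

theorem mech_truthful_waitProfile_toChild_one :
    (mech (fun _ _ => true) waitProfile 1).toChild () = some true := by
  simp [mech, oneHomeMech, acceptedBefore, offer, waitProfile, cfProfile]

theorem not_patienceFree : ¬ market.patienceFree (mech fun _ _ => true) := by
  intro h
  have := h (fun _ _ => true) 0 () false (mech_truthful_toChild_zero _) 1 one_pos true
    mech_truthful_waitProfile_toChild_one
  norm_num [Market.Vt, market] at this

theorem not_strategyProofR : ¬ market.strategyProofR mech := by
  intro h
  have := h () (fun _ _ => true) (fun _ _ => true) (fun _ _ => true) waitProfile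
    (by simp [market, Bool.forall_bool]) (fun _ => rfl) (fun _ _ => rfl)
    (fun _ hne => (hne rfl).elim) _ _
    (Or.inl ⟨0, false, mech_truthful_toChild_zero _, rfl, rfl⟩)
    (Or.inl ⟨1, true, mech_truthful_waitProfile_toChild_one,
      by simp [waitProfile, cfProfile], rfl⟩)
  norm_num [Market.Vt, market] at this

end SeqDACounterexample

/-- Proposition 2: Sequential Deferred Acceptance is justified envy-free, individually
rational, and strictly non-wasteful at every period and action profile, but it is
neither patience-free nor strategy-proof. -/
theorem seqDA_props :
    (∀ (C H : Type) (M : Market C H) (Q : Mechanism C H), M.IsSeqDA Q →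
      M.justifiedEnvyFree Q ∧ M.individuallyRational Q ∧ M.strictlyNonWasteful Q) ∧
    (∃ (C H : Type) (M : Market C H) (Q : Mechanism C H),
      M.IsSeqDA Q ∧ ¬ M.patienceFree Q) ∧
    (∃ (C H : Type) (M : Market C H) (Q : ReportMechanism C H),
      (∀ σ, (M.reported σ).IsSeqDA (Q σ)) ∧ ¬ M.strategyProofR Q) :=
  ⟨fun _ _ _ _ hQ => ⟨hQ.justifiedEnvyFree, hQ.individuallyRational, hQ.strictlyNonWasteful⟩,
    ⟨Bool, Unit, SeqDACounterexample.market, SeqDACounterexample.mech fun _ _ => true,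
      SeqDACounterexample.reported_truthful ▸ SeqDACounterexample.isSeqDA_mech _,
      SeqDACounterexample.not_patienceFree⟩,
    ⟨Bool, Unit, SeqDACounterexample.market, SeqDACounterexample.mech,
      SeqDACounterexample.isSeqDA_mech, SeqDACounterexample.not_strategyProofR⟩⟩
end

section
/- In any dynamic mechanism where matchings are deterministic functions of market and action histories, a home's realized outcome under an arbitrary accept/reject strategy equals its outcome under the counterfactual strategy of rejecting everything before its first acceptance time and accepting then: for any home h and any strategy ā_h that first leads to acceptance of a placement at time t', the matchings through t' under (ā_h, a_{-h}) coincide with those under the counterfactual profile â(t', h). Consequently h's realized payoff depends only on its first acceptance time. -/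
theorem Matching.toChild_ne_none_of_toHome_eq {C H : Type} (m : Matching C H) {c : C} {h : H}
    (hm : m.toHome c = some h) : m.toChild h ≠ none := by
  simp [(m.consistent c h).mp hm]

namespace Market

variable {C H : Type} {M : Market C H} {Q : Mechanism C H} {a b : Actions H} {t : ℕ}

theorem activeC_congr (hQ : ∀ k < t, Q b k = Q a k)
    (hagree : ∀ k < t, ∀ h, (Q b k).toChild h ≠ none → b h k = a h k) (c : C) :
    M.activeC Q b c t ↔ M.activeC Q a c t := by
  unfold activeC
  refine and_congr_right' (not_congr (exists_congr fun k => and_congr_right fun hk => ?_))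
  refine exists_congr fun h => ⟨fun ⟨hm, hacc⟩ => ⟨?_, ?_⟩, fun ⟨hm, hacc⟩ => ⟨?_, ?_⟩⟩
  · rwa [← hQ k hk]
  · rwa [← hagree k hk h ((Q b k).toChild_ne_none_of_toHome_eq hm)]
  · rwa [hQ k hk]
  · rwa [hagree k hk h ((Q b k).toChild_ne_none_of_toHome_eq (hQ k hk ▸ hm))]

theorem activeH_congr (hQ : ∀ k < t, Q b k = Q a k)
    (hagree : ∀ k < t, ∀ h, (Q b k).toChild h ≠ none → b h k = a h k) (h : H) :
    M.activeH Q b h t ↔ M.activeH Q a h t := by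
  unfold activeH
  refine and_congr_right' (not_congr (exists_congr fun k => and_congr_right fun hk => ?_))
  rw [← hQ k hk]
  exact and_congr_right fun hm => by rw [hagree k hk h hm]

theorem historyDetermined.eq_of_agree_on_matched (hdet : M.historyDetermined Q)
    (hagree : ∀ k < t, ∀ h, (Q a k).toChild h ≠ none → b h k = a h k) :
    ∀ k ≤ t, Q b k = Q a k := by
  intro k
  induction k using Nat.strong_induction_on with
  | _ k ih =>
    intro hk
    have hQ : ∀ j ≤ k, ∀ i < j, Q b i = Q a i :=
      fun j hj i hi => ih i (hi.trans_le hj) ((hi.trans_le hj).le.trans hk)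
    have hagree' : ∀ j ≤ k, ∀ i < j, ∀ h, (Q b i).toChild h ≠ none → b h i = a h i :=
      fun j hj i hi h hm => hagree i ((hi.trans_le hj).trans_le hk) h (hQ j hj i hi ▸ hm)
    exact hdet b a k (fun j hj => activeC_congr (hQ j hj) (hagree' j hj))
      (fun j hj => activeH_congr (hQ j hj) (hagree' j hj)) (hQ k le_rfl)

theorem feasible.toChild_eq_none_of_accepted (hfeas : M.feasible Q) {h : H} {c : C} {t' : ℕ}
    (hoff : (Q a t').toChild h = some c) (hacc : a h t' = true) (ht : t' < t) :
    (Q a t).toChild h = none := by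
  by_contra hm
  obtain ⟨c', hc'⟩ := Option.ne_none_iff_exists'.mp hm
  have hactive := (hfeas a t c' h (((Q a t).consistent c' h).mpr hc')).2
  exact hactive.2 ⟨t', ht, by simp [hoff], hacc⟩

theorem payoffIs_of_accept {h : H} {c : C} (hoff : (Q a t).toChild h = some c)
    (hacc : a h t = true) : M.payoffIs Q a h (M.Vt h c t) :=
  Or.inl ⟨t, c, hoff, hacc, rfl⟩

theorem feasible.eq_of_payoffIs_of_first_accept (hfeas : M.feasible Q) {h : H} {c : C}
    {t' : ℕ} (hoff : (Q a t').toChild h = some c) (hacc : a h t' = true)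
    (hfirst : ∀ k < t', (Q a k).toChild h = none ∨ a h k = false) {x : ℝ}
    (hx : M.payoffIs Q a h x) : x = M.Vt h c t' := by
  rcases hx with ⟨t, c', hm, ha, rfl⟩ | ⟨hnever, -⟩
  · rcases lt_trichotomy t t' with hlt | rfl | hgt
    · rcases hfirst t hlt with hn | hf <;> simp_all
    · simp_all
    · simp [hfeas.toChild_eq_none_of_accepted hoff hacc hgt] at hm
  · simp [hnever t' c hoff] at hacc

end Market

section cfProfile

variable {H : Type} (a : Actions H) (h : H) (t' : ℕ)

theorem cfProfile_apply_self_of_lt {k : ℕ} (hk : k < t') : cfProfile a h t' h k = false := by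
  simp [cfProfile, hk]

theorem cfProfile_apply_self : cfProfile a h t' h t' = true := by
  simp [cfProfile]

theorem cfProfile_apply_of_ne {h' : H} (hne : h' ≠ h) (k : ℕ) :
    cfProfile a h t' h' k = a h' k := by
  simp [cfProfile, hne]

theorem cfProfile_agree_on_matched {C : Type} {m : ℕ → Matching C H}
    (hfirst : ∀ k < t', (m k).toChild h = none ∨ a h k = false) :
    ∀ k < t', ∀ h', (m k).toChild h' ≠ none → cfProfile a h t' h' k = a h' k := by
  intro k hk h' hm
  by_cases hh : h' = h
  · subst hh
    rw [cfProfile_apply_self_of_lt a h' t' hk, (hfirst k hk).resolve_left hm]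
  · exact cfProfile_apply_of_ne a h t' hh k

end cfProfile

/-- For any feasible, history-determined dynamic mechanism, a home's realized outcome
under an arbitrary accept/reject strategy whose first acceptance (of an offer) occurs
at `t'` coincides with its outcome under the counterfactual strategy of rejecting
everything before `t'` and accepting at `t'`: matchings coincide through `t'` and the
realized payoff is the same. -/
theorem outcome_depends_only_on_first_acceptance {C H : Type} (M : Market C H)
    (Q : Mechanism C H) (hfeas : M.feasible Q) (hdet : M.historyDetermined Q)
    (h : H) (a' : Actions H) (t' : ℕ) (c : C)
    (hoff : (Q a' t').toChild h = some c) (hacc : a' h t' = true)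
    (hfirst : ∀ k < t', (Q a' k).toChild h = none ∨ a' h k = false) :
    (∀ k ≤ t', Q (cfProfile a' h t') k = Q a' k) ∧
    (∀ x : ℝ, M.payoffIs Q a' h x → M.payoffIs Q (cfProfile a' h t') h x) := by
  have hsame := hdet.eq_of_agree_on_matched (cfProfile_agree_on_matched a' h t' hfirst)
  refine ⟨hsame, fun x hx => ?_⟩
  rw [hfeas.eq_of_payoffIs_of_first_accept hoff hacc hfirst hx]
  exact Market.payoffIs_of_accept (hsame t' le_rfl ▸ hoff) (cfProfile_apply_self a' h t')
end
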